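/- arXiv:1701.03925 — 7 statements merged into one kernel-verified Lean document; each statement's English description precedes it below -/
import Mathlib

section
/- Let φ : ℚ^n → ℚ be a ℚ-concave function (i.e., for all rational convex combinations Σ a_i v_i with a_i ∈ ℚ_{≥0}, Σ a_i = 1, one has φ(Σ a_i v_i) ≥ Σ a_i φ(v_i)). Then for every point x̄ ∈ ℝ^n there exist positive real constants C and r such that |φ(x)| ≤ C for all x ∈ ℚ^n with |x − x̄| ≤ r. -/
/-- `φ : ℚ^n → ℚ` is ℚ-concave if it satisfies the concavity inequality for all
rational convex combinations with rational coefficients. -/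
def QConcave (n : ℕ) (φ : (Fin n → ℚ) → ℚ) : Prop :=
  ∀ (m : ℕ) (a : Fin m → ℚ) (v : Fin m → (Fin n → ℚ)),
    (∀ i, 0 ≤ a i) → (∑ i, a i) = 1 →
      (∑ i, a i * φ (v i)) ≤ φ (∑ i, a i • v i)

/-- The embedding of `ℚ^n` into Euclidean space `ℝ^n`. -/
def ratEmb (n : ℕ) (x : Fin n → ℚ) : EuclideanSpace ℝ (Fin n) := WithLp.toLp 2 (fun i => (x i : ℝ))

/-!
If `|x - c|₁ ≤ R` with `c` rational, then `x` is a rational convex combination of `c` and the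
vertices `c ± R eᵢ` of the cross-polytope, with weights `|xᵢ - cᵢ| / R`; so `φ` is bounded below
on the cross-polytope by its minimum over these finitely many points. The cross-polytope is
symmetric about `c`, and concavity at the midpoint gives `φ x + φ (2c - x) ≤ 2 φ c`, which turns
the lower bound into an upper one. A Euclidean ball of radius `1/2` around `x̄` lies in the
cross-polytope of radius `n + 1` around the rounding of `x̄`.
-/

section

variable {n : ℕ}

lemma crossPolytope_sum_smul_eq (c t : Fin n → ℚ) {R : ℚ} (hR : R ≠ 0) :
    (1 - ∑ i, |t i| / R) • c + ∑ i, (|t i| / R) • (c + Pi.single i (R * SignType.sign (t i)))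
      = c + t := by
  have hsingle : ∀ i, (|t i| / R) • Pi.single i (R * (SignType.sign (t i) : ℚ))
      = Pi.single i (t i) := by
    intro i
    rw [← Pi.single_smul, smul_eq_mul]
    congr 1
    field_simp
    exact abs_mul_sign (t i)
  simp only [smul_add, Finset.sum_add_distrib, ← Finset.sum_smul, hsingle, Finset.univ_sum_single]
  module

namespace QConcave

variable {φ : (Fin n → ℚ) → ℚ}

lemma le_apply_sum (hφ : QConcave n φ) {m : ℕ} (a : Fin m → ℚ) (v : Fin m → Fin n → ℚ)
    (ha : ∀ i, 0 ≤ a i) (hs : ∑ i, a i = 1) {b : ℚ} (hb : ∀ i, b ≤ φ (v i)) :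
    b ≤ φ (∑ i, a i • v i) :=
  calc b = ∑ i, a i * b := by rw [← Finset.sum_mul, hs, one_mul]
    _ ≤ ∑ i, a i * φ (v i) :=
      Finset.sum_le_sum fun i _ => mul_le_mul_of_nonneg_left (hb i) (ha i)
    _ ≤ φ (∑ i, a i • v i) := hφ m a v ha hs

lemma add_apply_two_smul_sub_le (hφ : QConcave n φ) (c x : Fin n → ℚ) :
    φ x + φ (2 • c - x) ≤ 2 * φ c := by
  have hmid : ∑ i, ![(1 / 2 : ℚ), 1 / 2] i • ![x, 2 • c - x] i = c := by
    simp only [Fin.sum_univ_two, Matrix.cons_val_zero, Matrix.cons_val_one]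
    module
  have h := hφ 2 ![(1 / 2 : ℚ), 1 / 2] ![x, 2 • c - x]
    (by simp [Fin.forall_fin_two]) (by norm_num)
  simp only [Fin.sum_univ_two, Matrix.cons_val_zero, Matrix.cons_val_one] at h hmid
  rw [hmid] at h
  linarith

lemma exists_le_of_sum_abs_sub_le (hφ : QConcave n φ) (c : Fin n → ℚ) {R : ℚ} (hR : 0 < R) :
    ∃ b, ∀ x, ∑ i, |x i - c i| ≤ R → b ≤ φ x := by
  set V : Set (Fin n → ℚ) :=
    insert c (Set.range fun p : Fin n × SignType => c + Pi.single p.1 (R * p.2))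
  have hV : V.Finite := (Set.finite_range _).insert c
  obtain ⟨b, hb⟩ := (hV.image φ).bddBelow
  have hbV : ∀ v ∈ V, b ≤ φ v := fun v hv => hb (Set.mem_image_of_mem φ hv)
  refine ⟨b, fun x hx => ?_⟩
  set t := x - c
  have hS : ∑ i, |t i| / R ≤ 1 := by
    rw [← Finset.sum_div]
    exact (div_le_one hR).mpr hx
  have hcomb := hφ.le_apply_sum (b := b)
    (Fin.cons (1 - ∑ i, |t i| / R) fun i => |t i| / R : Fin (n + 1) → ℚ)
    (Fin.cons c fun i => c + Pi.single i (R * SignType.sign (t i)) : Fin (n + 1) → Fin n → ℚ)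
    ?_ ?_ ?_
  · simp only [Fin.sum_univ_succ, Fin.cons_zero, Fin.cons_succ] at hcomb
    rwa [crossPolytope_sum_smul_eq c t hR.ne', add_sub_cancel] at hcomb
  · refine Fin.cases (by simpa using hS) fun i => ?_
    simp only [Fin.cons_succ]
    positivity
  · simp [Fin.sum_univ_succ]
  · refine Fin.cases (by simpa using hbV c (Set.mem_insert c _)) fun i => ?_
    simpa using hbV _ (Set.mem_insert_of_mem c ⟨(i, SignType.sign (t i)), rfl⟩)

lemma exists_abs_le_of_sum_abs_sub_le (hφ : QConcave n φ) (c : Fin n → ℚ) {R : ℚ}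
    (hR : 0 < R) : ∃ C, 0 < C ∧ ∀ x, ∑ i, |x i - c i| ≤ R → |φ x| ≤ C := by
  obtain ⟨b, hb⟩ := hφ.exists_le_of_sum_abs_sub_le c hR
  refine ⟨max |b| |2 * φ c - b| + 1, by positivity, fun x hx => ?_⟩
  have hreflect : ∑ i, |(2 • c - x) i - c i| ≤ R := by
    convert hx using 2 with i
    rw [abs_sub_comm]
    simp only [Pi.sub_apply, Pi.smul_apply]
    ring_nf
  have hup : φ x ≤ 2 * φ c - b := by
    linarith [hb _ hreflect, hφ.add_apply_two_smul_sub_le c x]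
  exact (abs_le_max_abs_abs (hb x hx) hup).trans (le_add_of_nonneg_right zero_le_one)

end QConcave

lemma sum_abs_sub_le_of_norm_ratEmb_sub_le {x c : Fin n → ℚ}
    {xbar : EuclideanSpace ℝ (Fin n)} {r s : ℝ} (hx : ‖ratEmb n x - xbar‖ ≤ r)
    (hc : ∀ i, |xbar i - c i| ≤ s) : ((∑ i, |x i - c i| : ℚ) : ℝ) ≤ n * (r + s) := by
  have hcoord : ∀ i, |(x i : ℝ) - c i| ≤ r + s := fun i =>
    calc |(x i : ℝ) - c i| ≤ |(x i : ℝ) - xbar i| + |xbar i - c i| := abs_sub_le _ _ _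
      _ ≤ ‖ratEmb n x - xbar‖ + s :=
        add_le_add (PiLp.norm_apply_le (ratEmb n x - xbar) i) (hc i)
      _ ≤ r + s := by linarith
  push_cast
  exact (Finset.sum_le_sum fun i _ => hcoord i).trans_eq (by simp [mul_add])

end

theorem qconcave_locally_bounded (n : ℕ) (φ : (Fin n → ℚ) → ℚ) (hφ : QConcave n φ)
    (xbar : EuclideanSpace ℝ (Fin n)) :
    ∃ C r : ℝ, 0 < C ∧ 0 < r ∧
      ∀ x : Fin n → ℚ, ‖ratEmb n x - xbar‖ ≤ r → |(φ x : ℝ)| ≤ C := by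
  obtain ⟨c, hc⟩ : ∃ c : Fin n → ℚ, ∀ i, |xbar i - c i| ≤ 1 / 2 :=
    ⟨fun i => round (xbar i), fun i => by
      simpa only [Rat.cast_intCast] using abs_sub_round (xbar i)⟩
  obtain ⟨C, hC, hbound⟩ := hφ.exists_abs_le_of_sum_abs_sub_le c (R := n + 1) (by positivity)
  refine ⟨C, 1 / 2, by exact_mod_cast hC, by norm_num, fun x hx => ?_⟩
  have hball : ((∑ i, |x i - c i| : ℚ) : ℝ) ≤ n + 1 :=
    (sum_abs_sub_le_of_norm_ratEmb_sub_le hx hc).trans (by linarith)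
  exact_mod_cast hbound x (by exact_mod_cast hball)
end

section
/- Let v = (v₁,v₂) ∈ ℤ² be primitive with v₁, v₂ > 0, and let x, y be the unique integers with y ≤ 0, x ≥ 0, x·v₁ + y·v₂ = 1, 0 ≤ −y < v₁, 0 ≤ x < v₂. Set v_α = (−y, x) and v_β = (v₁+y, v₂−x). Then v = v_α + v_β, both v_α and v_β are primitive, and the pair (v_α, v_β) has determinant ±1 (i.e., spans ℤ² as a lattice). -/
theorem barycenter_decomposition (v₁ v₂ x y : ℤ) (h₁ : 0 < v₁) (h₂ : 0 < v₂)
    (hprim : Int.gcd v₁ v₂ = 1)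
    (hy : y ≤ 0) (hx : 0 ≤ x) (hbez : x * v₁ + y * v₂ = 1)
    (hy₁ : 0 ≤ -y) (hy₂ : -y < v₁) (hx₁ : 0 ≤ x) (hx₂ : x < v₂) :
    ((v₁, v₂) : ℤ × ℤ) = (-y, x) + (v₁ + y, v₂ - x) ∧
      Int.gcd (-y) x = 1 ∧ Int.gcd (v₁ + y) (v₂ - x) = 1 ∧
        ((-y) * (v₂ - x) - x * (v₁ + y) = 1 ∨ (-y) * (v₂ - x) - x * (v₁ + y) = -1) := by
  refine ⟨by simp [Prod.ext_iff], ?_, ?_, Or.inr (by linarith [hbez])⟩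
  · exact Int.isCoprime_iff_gcd_eq_one.mp ⟨-v₂, v₁, by linarith [hbez]⟩
  · exact Int.isCoprime_iff_gcd_eq_one.mp ⟨x, y, by linarith [hbez]⟩
end

section
/- Define φ : ℝ² → ℝ by φ(a,b) = ab/(a+b) if a,b ≥ 0 and a+b > 0, φ(0,0) = 0, and φ(a,b) = min{a,b} otherwise. Then φ is concave and positively homogeneous of degree 1 (conical): φ(λx) = λφ(x) for all λ ≥ 0. -/
/-- The conical concave function associated to a nef toric b-divisor on ℙ²:
`φ(a,b) = ab/(a+b)` if `a,b ≥ 0` and `a+b > 0` (so `φ(0,0) = 0`), and `min a b` otherwise. -/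
noncomputable def phiP2 (p : ℝ × ℝ) : ℝ :=
  if 0 ≤ p.1 ∧ 0 ≤ p.2 ∧ 0 < p.1 + p.2 then p.1 * p.2 / (p.1 + p.2)
  else if p = (0, 0) then 0 else min p.1 p.2

lemma phiP2_le (p : ℝ × ℝ) (s : ℝ) (hs0 : 0 ≤ s) (hs1 : s ≤ 1) :
    phiP2 p ≤ s ^ 2 * p.1 + (1 - s) ^ 2 * p.2 := by
  obtain ⟨a, b⟩ := p
  unfold phiP2
  dsimp only
  split_ifs with h1 h2
  · obtain ⟨ha, hb, hab⟩ := h1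
    rw [div_le_iff₀ hab]
    nlinarith [sq_nonneg (s * a - (1 - s) * b)]
  · rw [Prod.ext_iff] at h2
    obtain ⟨ha, hb⟩ := h2
    dsimp at ha hb
    rw [ha, hb]
    simp
  · set m := min a b with hm
    have hma : m ≤ a := min_le_left a b
    have hmb : m ≤ b := min_le_right a b
    have hm0 : m ≤ 0 := by
      by_contra hc
      push_neg at hc
      exact h1 ⟨le_of_lt (lt_of_lt_of_le hc hma), le_of_lt (lt_of_lt_of_le hc hmb),
        by nlinarith⟩
    nlinarith [mul_nonneg (sq_nonneg s) (sub_nonneg.2 hma),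
      mul_nonneg (sq_nonneg (1 - s)) (sub_nonneg.2 hmb),
      mul_nonneg (mul_nonneg hs0 (sub_nonneg.2 hs1)) (neg_nonneg.2 hm0)]

lemma phiP2_eq (p : ℝ × ℝ) :
    ∃ s : ℝ, 0 ≤ s ∧ s ≤ 1 ∧ phiP2 p = s ^ 2 * p.1 + (1 - s) ^ 2 * p.2 := by
  obtain ⟨a, b⟩ := p
  unfold phiP2
  dsimp only
  split_ifs with h1 h2
  · obtain ⟨ha, hb, hab⟩ := h1
    refine ⟨b / (a + b), div_nonneg hb hab.le, ?_, ?_⟩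
    · rw [div_le_one hab]; linarith
    · field_simp
      ring
  · rw [Prod.ext_iff] at h2
    obtain ⟨ha, hb⟩ := h2
    dsimp at ha hb
    exact ⟨0, le_refl 0, zero_le_one, by rw [ha, hb]; ring⟩
  · rcases le_total a b with h | h
    · exact ⟨1, zero_le_one, le_refl 1, by rw [min_eq_left h]; ring⟩
    · exact ⟨0, le_refl 0, zero_le_one, by rw [min_eq_right h]; ring⟩

theorem phiP2_concave_conical :
    ConcaveOn ℝ Set.univ phiP2 ∧
      ∀ (l : ℝ), 0 ≤ l → ∀ x : ℝ × ℝ, phiP2 (l • x) = l * phiP2 x := by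
  constructor
  · refine ⟨convex_univ, fun x _ y _ a b ha hb hab => ?_⟩
    obtain ⟨s, hs0, hs1, hs⟩ := phiP2_eq (a • x + b • y)
    have hx := phiP2_le x s hs0 hs1
    have hy := phiP2_le y s hs0 hs1
    have hz1 : (a • x + b • y).1 = a * x.1 + b * y.1 := rfl
    have hz2 : (a • x + b • y).2 = a * x.2 + b * y.2 := rfl
    rw [hs, hz1, hz2]
    simp only [smul_eq_mul]
    nlinarith [mul_le_mul_of_nonneg_left hx ha, mul_le_mul_of_nonneg_left hy hb]
  · intro l hl x
    rcases eq_or_lt_of_le hl with h0 | hl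
    · rw [← h0, zero_smul]
      norm_num [phiP2]
    · obtain ⟨a, b⟩ := x
      have hsm : l • ((a, b) : ℝ × ℝ) = (l * a, l * b) := rfl
      have h1 : (0 ≤ l * a ∧ 0 ≤ l * b ∧ 0 < l * a + l * b) ↔
          (0 ≤ a ∧ 0 ≤ b ∧ 0 < a + b) := by
        constructor <;> rintro ⟨h₁, h₂, h₃⟩ <;> refine ⟨?_, ?_, ?_⟩ <;> nlinarith
      have h2 : ((l * a, l * b) : ℝ × ℝ) = (0, 0) ↔ ((a, b) : ℝ × ℝ) = (0, 0) := by
        simp [Prod.ext_iff, mul_eq_zero, hl.ne']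
      rw [hsm]
      unfold phiP2
      dsimp only
      rw [if_congr h1 rfl rfl, if_congr h2 rfl rfl]
      split_ifs with c1 c2
      · obtain ⟨ha, hb, hab⟩ := c1
        have h3 : l * a + l * b ≠ 0 := by nlinarith
        field_simp
      · simp
      · rcases le_total a b with h | h
        · rw [min_eq_left h, min_eq_left (by nlinarith : l * a ≤ l * b)]
        · rw [min_eq_right h, min_eq_right (by nlinarith : l * b ≤ l * a)]
end

section
/- Let v = (v₁,v₂) ∈ ℤ² be primitive with v₁, v₂ > 0, and let x, y be the integers with y ≤ 0, x ≥ 0, x·v₁ + y·v₂ = 1, 0 ≤ −y < v₁, 0 ≤ x < v₂. Define φ(a,b) = ab/(a+b) for a,b ≥ 0 with a+b > 0 and φ(a,b) = min{a,b} otherwise. Then φ(v) − φ(−y, x) − φ(v₁+y, v₂−x) = 1 / ((v₁+v₂)(x−y)(v₁+v₂−x+y)). -/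
lemma phiP2_of_nonneg {a b : ℝ} (ha : 0 ≤ a) (hb : 0 ≤ b) (hab : 0 < a + b) :
    phiP2 (a, b) = a * b / (a + b) :=
  if_pos ⟨ha, hb, hab⟩

lemma mul_div_add_sub_mul_div_add_sub_mul_div_add {a b c d : ℝ} (hab : a + b ≠ 0)
    (hcd : c + d ≠ 0) (h : a - c + (b - d) ≠ 0) :
    a * b / (a + b) - c * d / (c + d) - (a - c) * (b - d) / (a - c + (b - d)) =
      (a * d - b * c) ^ 2 / ((a + b) * (c + d) * (a - c + (b - d))) := by
  field_simp
  ring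

lemma phiP2_sub_phiP2_sub_phiP2 {a b c d : ℝ} (hc : 0 ≤ c) (hd : 0 ≤ d) (hac : c ≤ a)
    (hbd : d ≤ b) (hcd : 0 < c + d) (h : 0 < a - c + (b - d)) :
    phiP2 (a, b) - phiP2 (c, d) - phiP2 (a - c, b - d) =
      (a * d - b * c) ^ 2 / ((a + b) * (c + d) * (a - c + (b - d))) := by
  rw [phiP2_of_nonneg (by linarith) (by linarith) (by linarith), phiP2_of_nonneg hc hd hcd,
    phiP2_of_nonneg (by linarith) (by linarith) h]
  exact mul_div_add_sub_mul_div_add_sub_mul_div_add (by linarith) hcd.ne' h.ne'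

theorem jumping_function_value_general (v₁ v₂ x y : ℤ)
    (hy : y ≤ 0) (hx : 0 ≤ x) (hbez : x * v₁ + y * v₂ = 1)
    (hy₂ : -y < v₁) (hx₂ : x < v₂) :
    phiP2 ((v₁ : ℝ), (v₂ : ℝ)) - phiP2 ((-y : ℤ), (x : ℝ)) -
        phiP2 (((v₁ + y : ℤ) : ℝ), ((v₂ - x : ℤ) : ℝ)) =
      1 / (((v₁ + v₂ : ℤ) : ℝ) * ((x - y : ℤ) : ℝ) * ((v₁ + v₂ - x + y : ℤ) : ℝ)) := by
  have hq : (0 : ℤ) < -y + x := by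
    by_contra h
    obtain ⟨rfl, rfl⟩ : x = 0 ∧ y = 0 := by omega
    simp at hbez
  have hdet : (v₁ : ℝ) * x - v₂ * -y = 1 := by
    have hbezR : ((x * v₁ + y * v₂ : ℤ) : ℝ) = 1 := by exact_mod_cast hbez
    push_cast at hbezR
    linear_combination hbezR
  have key := phiP2_sub_phiP2_sub_phiP2 (a := v₁) (b := v₂) (c := -y) (d := x)
    (by exact_mod_cast (by omega : (0 : ℤ) ≤ -y)) (by exact_mod_cast hx)
    (by exact_mod_cast hy₂.le) (by exact_mod_cast hx₂.le) (by exact_mod_cast hq)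
    (by exact_mod_cast (by omega : (0 : ℤ) < v₁ - -y + (v₂ - x)))
  rw [hdet, one_pow] at key
  push_cast
  rw [← sub_neg_eq_add (v₁ : ℝ), key]
  ring

theorem jumping_function_value (v₁ v₂ x y : ℤ) (h₁ : 0 < v₁) (h₂ : 0 < v₂)
    (hprim : Int.gcd v₁ v₂ = 1)
    (hy : y ≤ 0) (hx : 0 ≤ x) (hbez : x * v₁ + y * v₂ = 1)
    (hy₂ : -y < v₁) (hx₂ : x < v₂) :
    phiP2 ((v₁ : ℝ), (v₂ : ℝ)) - phiP2 ((-y : ℤ), (x : ℝ)) -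
        phiP2 (((v₁ + y : ℤ) : ℝ), ((v₂ - x : ℤ) : ℝ)) =
      1 / (((v₁ + v₂ : ℤ) : ℝ) * ((x - y : ℤ) : ℝ) * ((v₁ + v₂ - x + y : ℤ) : ℝ)) :=
  jumping_function_value_general v₁ v₂ x y hy hx hbez hy₂ hx₂
end

section
/- The sum over all pairs (m,n) of positive coprime integers of 1/(m²n²(m+n)²) converges and equals 1/3. -/
namespace CMT

/-- Stern–Brocot style pair assigned to a binary word. -/
def pair : List Bool → ℕ × ℕ
  | [] => (1, 1)
  | b :: w =>
    let p := pair w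
    if b then (p.1, p.1 + p.2) else (p.1 + p.2, p.2)

@[simp] lemma pair_nil : pair [] = (1, 1) := rfl

@[simp] lemma pair_true (w : List Bool) :
    pair (true :: w) = ((pair w).1, (pair w).1 + (pair w).2) := rfl

@[simp] lemma pair_false (w : List Bool) :
    pair (false :: w) = ((pair w).1 + (pair w).2, (pair w).2) := rfl

lemma pair_pos : ∀ w : List Bool, 0 < (pair w).1 ∧ 0 < (pair w).2
  | [] => ⟨one_pos, one_pos⟩
  | b :: w => by
    obtain ⟨h1, h2⟩ := pair_pos w
    cases b <;> simp <;> omega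

lemma pair_coprime : ∀ w : List Bool, Nat.Coprime (pair w).1 (pair w).2
  | [] => Nat.coprime_one_left 1
  | b :: w => by
    have h := pair_coprime w
    cases b
    · simpa [Nat.Coprime, Nat.add_comm] using
        (Nat.coprime_add_self_right (m := (pair w).2) (n := (pair w).1)).mpr h.symm |>.symm
    · simpa using (Nat.coprime_add_self_right (m := (pair w).1) (n := (pair w).2)).mpr h

lemma pair_sum_ge : ∀ w : List Bool, w.length + 2 ≤ (pair w).1 + (pair w).2
  | [] => by simp
  | b :: w => by
    have h := pair_sum_ge w
    have h1 := (pair_pos w).1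
    have h2 := (pair_pos w).2
    cases b <;> simp <;> omega

lemma pair_injective : Function.Injective pair := by
  intro w1
  induction w1 with
  | nil =>
    intro w2 h
    cases w2 with
    | nil => rfl
    | cons b w =>
      exfalso
      have h1 := (pair_pos w).1
      have h2 := (pair_pos w).2
      cases b <;> simp [Prod.ext_iff] at h <;> omega
  | cons b w ih =>
    intro w2 h
    cases w2 with
    | nil =>
      exfalso
      have h1 := (pair_pos w).1
      have h2 := (pair_pos w).2
      cases b <;> simp [Prod.ext_iff] at h <;> omega
    | cons b2 w2 =>
      have p1 := (pair_pos w).1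
      have p2 := (pair_pos w).2
      have q1 := (pair_pos w2).1
      have q2 := (pair_pos w2).2
      cases b <;> cases b2 <;> simp [Prod.ext_iff] at h
      · exact congrArg (List.cons false) (ih (Prod.ext (by omega) (by omega)))
      · exfalso; omega
      · exfalso; omega
      · exact congrArg (List.cons true) (ih (Prod.ext (by omega) (by omega)))

lemma pair_surjective_aux : ∀ s m n : ℕ, m + n = s → 0 < m → 0 < n →
    Nat.Coprime m n → ∃ w, pair w = (m, n) := by
  intro s
  induction s using Nat.strong_induction_on with
  | _ s ih =>
    intro m n hs hm hn hco
    rcases lt_trichotomy m n with h | h | h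
    · have hco' : Nat.Coprime m (n - m) := by
        have : (n - m) + m = n := by omega
        exact (Nat.coprime_add_self_right).mp (by rwa [this])
      obtain ⟨w, hw⟩ := ih (m + (n - m)) (by omega) m (n - m) rfl hm (by omega) hco'
      refine ⟨true :: w, ?_⟩
      simp [hw]; omega
    · subst h
      have hm1 : m = 1 := by
        have := hco
        unfold Nat.Coprime at this
        rwa [Nat.gcd_self] at this
      exact ⟨[], by simp [Prod.ext_iff, hm1]⟩
    · have hco' : Nat.Coprime (m - n) n := by
        have h' : (m - n) + n = m := by omega
        have : Nat.Coprime n (m - n) :=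
          (Nat.coprime_add_self_right).mp (by rw [h']; exact hco.symm)
        exact this.symm
      obtain ⟨w, hw⟩ := ih ((m - n) + n) (by omega) (m - n) n rfl (by omega) hn hco'
      refine ⟨false :: w, ?_⟩
      simp [hw]; omega

/-- Real coordinates. -/
noncomputable def x (w : List Bool) : ℝ := ((pair w).1 : ℝ)
noncomputable def y (w : List Bool) : ℝ := ((pair w).2 : ℝ)

lemma x_pos (w : List Bool) : 0 < x w := by
  exact_mod_cast Nat.cast_pos.mpr (pair_pos w).1

lemma y_pos (w : List Bool) : 0 < y w := by
  exact_mod_cast Nat.cast_pos.mpr (pair_pos w).2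

@[simp] lemma x_true (w : List Bool) : x (true :: w) = x w := by simp [x]
@[simp] lemma y_true (w : List Bool) : y (true :: w) = x w + y w := by
  simp [x, y]
@[simp] lemma x_false (w : List Bool) : x (false :: w) = x w + y w := by
  simp [x, y]
@[simp] lemma y_false (w : List Bool) : y (false :: w) = y w := by simp [y]

/-- The summand. -/
noncomputable def F (w : List Bool) : ℝ := 1 / (x w ^ 2 * y w ^ 2 * (x w + y w) ^ 2)

/-- The telescoping potential. -/
noncomputable def H (w : List Bool) : ℝ := 1 / (3 * x w ^ 3 * y w ^ 3)

/-- The invariant weight. -/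
noncomputable def G (w : List Bool) : ℝ := 1 / (x w * y w)

lemma F_nonneg (w : List Bool) : 0 ≤ F w := by
  have := x_pos w; have := y_pos w
  unfold F; positivity

lemma H_nonneg (w : List Bool) : 0 ≤ H w := by
  have := x_pos w; have := y_pos w
  unfold H; positivity

lemma H_step (w : List Bool) : H w = F w + H (true :: w) + H (false :: w) := by
  have hx := x_pos w; have hy := y_pos w
  unfold H F
  simp only [x_true, y_true, x_false, y_false]
  have hxy : (0:ℝ) < x w + y w := by linarith
  field_simp
  ring

lemma G_step (w : List Bool) : G w = G (true :: w) + G (false :: w) := by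
  have hx := x_pos w; have hy := y_pos w
  unfold G
  simp only [x_true, y_true, x_false, y_false]
  have hxy : (0:ℝ) < x w + y w := by linarith
  field_simp
  ring

/-- Level `k` of the tree. -/
def L : ℕ → Finset (List Bool)
  | 0 => {[]}
  | k + 1 => (L k).image (List.cons true) ∪ (L k).image (List.cons false)

lemma length_of_mem_L : ∀ k, ∀ w ∈ L k, w.length = k := by
  intro k
  induction k with
  | zero => intro w hw; simp [L] at hw; simp [hw]
  | succ k ih =>
    intro w hw
    simp [L] at hw
    rcases hw with ⟨a, ha, rfl⟩ | ⟨a, ha, rfl⟩ <;> simp [ih a ha]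

lemma sum_L_succ (φ : List Bool → ℝ) (k : ℕ) :
    ∑ w ∈ L (k + 1), φ w = ∑ w ∈ L k, (φ (true :: w) + φ (false :: w)) := by
  have hdisj : Disjoint ((L k).image (List.cons true)) ((L k).image (List.cons false)) := by
    rw [Finset.disjoint_left]
    intro w hw1 hw2
    simp only [Finset.mem_image] at hw1 hw2
    obtain ⟨a, _, rfl⟩ := hw1
    obtain ⟨c, _, hc⟩ := hw2
    simp at hc
  rw [show L (k+1) = (L k).image (List.cons true) ∪ (L k).image (List.cons false) from rfl,
    Finset.sum_union hdisj,
    Finset.sum_image (by intro a _ b _ h; exact (List.cons.injEq _ _ _ _ ▸ h).2),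
    Finset.sum_image (by intro a _ b _ h; exact (List.cons.injEq _ _ _ _ ▸ h).2),
    ← Finset.sum_add_distrib]

lemma sum_H_L (k : ℕ) :
    ∑ w ∈ L k, H w = ∑ w ∈ L k, F w + ∑ w ∈ L (k + 1), H w := by
  rw [sum_L_succ H k, ← Finset.sum_add_distrib]
  apply Finset.sum_congr rfl
  intro w _
  linarith [H_step w]

lemma sum_G_L : ∀ k, ∑ w ∈ L k, G w = 1 := by
  intro k
  induction k with
  | zero => simp [L, G, x, y]
  | succ k ih =>
    rw [sum_L_succ G k]
    rw [← ih]
    apply Finset.sum_congr rfl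
    intro w _
    exact (G_step w).symm

lemma H_le (k : ℕ) (w : List Bool) (hw : w ∈ L k) :
    H w ≤ 1 / (3 * (k + 1) ^ 2) * G w := by
  have hx := x_pos w; have hy := y_pos w
  have hlen := length_of_mem_L k w hw
  have hsum : (k : ℕ) + 2 ≤ (pair w).1 + (pair w).2 := by
    have := pair_sum_ge w; omega
  have hprod : (k : ℕ) + 1 ≤ (pair w).1 * (pair w).2 := by
    have h1 := (pair_pos w).1; have h2 := (pair_pos w).2
    nlinarith [Nat.one_le_iff_ne_zero.mpr (Nat.pos_iff_ne_zero.mp h1)]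
  have hprodR : (k : ℝ) + 1 ≤ x w * y w := by
    have : ((k + 1 : ℕ) : ℝ) ≤ (((pair w).1 * (pair w).2 : ℕ) : ℝ) := by
      exact_mod_cast hprod
    push_cast at this
    simpa [x, y] using this
  have hk1 : (0:ℝ) < (k : ℝ) + 1 := by positivity
  unfold H G
  rw [div_mul_div_comm, one_mul]
  apply one_div_le_one_div_of_le
  · positivity
  · have h1 : ((k:ℝ) + 1) ^ 2 ≤ (x w * y w) ^ 2 := by nlinarith
    calc 3 * ((k:ℝ) + 1) ^ 2 * (x w * y w) ≤ 3 * (x w * y w)^2 * (x w * y w) := by nlinarith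
      _ = 3 * x w ^ 3 * y w ^ 3 := by ring

lemma sum_H_L_le (k : ℕ) : ∑ w ∈ L k, H w ≤ 1 / (3 * (k + 1) ^ 2) := by
  calc ∑ w ∈ L k, H w ≤ ∑ w ∈ L k, 1 / (3 * ((k:ℝ) + 1) ^ 2) * G w :=
        Finset.sum_le_sum (fun w hw => H_le k w hw)
    _ = 1 / (3 * ((k:ℝ) + 1) ^ 2) * ∑ w ∈ L k, G w := by rw [Finset.mul_sum]
    _ = 1 / (3 * ((k:ℝ) + 1) ^ 2) := by rw [sum_G_L k, mul_one]

/-- The full tree up to depth `N`. -/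
def U (N : ℕ) : Finset (List Bool) := (Finset.range (N + 1)).biUnion L

lemma sum_F_U (N : ℕ) : ∑ w ∈ U N, F w = 1 / 3 - ∑ w ∈ L (N + 1), H w := by
  induction N with
  | zero =>
    have : U 0 = L 0 := by simp [U]
    rw [this]
    have h0 : ∑ w ∈ L 0, H w = 1 / 3 := by simp [L, H, x, y]
    have := sum_H_L 0
    linarith
  | succ N ih =>
    have hU : U (N + 1) = U N ∪ L (N + 1) := by
      simp [U, Finset.range_add_one, Finset.biUnion_insert, Finset.union_comm]
    have hdisj : Disjoint (U N) (L (N + 1)) := by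
      simp [Finset.disjoint_left, U]
      intro w k hk hw hw'
      have h1 := length_of_mem_L k w hw
      have h2 := length_of_mem_L (N+1) w hw'
      omega
    rw [hU, Finset.sum_union hdisj, ih]
    have := sum_H_L (N + 1)
    linarith

lemma mem_U (N : ℕ) (w : List Bool) (hlen : w.length ≤ N) : w ∈ U N := by
  have : ∀ w : List Bool, w ∈ L w.length := by
    intro w
    induction w with
    | nil => simp [L]
    | cons b w ih =>
      cases b
      · simp only [List.length_cons, L]
        exact Finset.mem_union_right _ (Finset.mem_image_of_mem _ ih)
      · simp only [List.length_cons, L]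
        exact Finset.mem_union_left _ (Finset.mem_image_of_mem _ ih)
  simp only [U, Finset.mem_biUnion]
  exact ⟨w.length, Finset.mem_range.mpr (by omega), this w⟩

noncomputable def toS (w : List Bool) :
    {p : ℕ × ℕ // 0 < p.1 ∧ 0 < p.2 ∧ Nat.Coprime p.1 p.2} :=
  ⟨pair w, (pair_pos w).1, (pair_pos w).2, pair_coprime w⟩

lemma toS_bijective : Function.Bijective toS := by
  constructor
  · intro a b h
    exact pair_injective (congrArg Subtype.val h)
  · rintro ⟨⟨m, n⟩, hm, hn, hco⟩
    obtain ⟨w, hw⟩ := pair_surjective_aux (m + n) m n rfl hm hn hco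
    exact ⟨w, Subtype.ext hw⟩

noncomputable def e : List Bool ≃ {p : ℕ × ℕ // 0 < p.1 ∧ 0 < p.2 ∧ Nat.Coprime p.1 p.2} :=
  Equiv.ofBijective toS toS_bijective

end CMT

theorem coprime_mordell_tornheim :
    HasSum
      (fun p : {p : ℕ × ℕ // 0 < p.1 ∧ 0 < p.2 ∧ Nat.Coprime p.1 p.2} =>
        (1 : ℝ) / ((p.1.1 : ℝ) ^ 2 * (p.1.2 : ℝ) ^ 2 * ((p.1.1 : ℝ) + (p.1.2 : ℝ)) ^ 2))
      (1 / 3) := by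
  rw [← Equiv.hasSum_iff CMT.e]
  have heq : (fun p : {p : ℕ × ℕ // 0 < p.1 ∧ 0 < p.2 ∧ Nat.Coprime p.1 p.2} =>
        (1 : ℝ) / ((p.1.1 : ℝ) ^ 2 * (p.1.2 : ℝ) ^ 2 * ((p.1.1 : ℝ) + (p.1.2 : ℝ)) ^ 2))
      ∘ ⇑CMT.e = CMT.F := by
    funext w
    simp [CMT.e, CMT.toS, CMT.F, CMT.x, CMT.y, Equiv.ofBijective]
  rw [heq]
  apply hasSum_of_isLUB_of_nonneg _ CMT.F_nonneg
  constructor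
  · -- upper bound
    rintro r ⟨s, rfl⟩
    set N := s.sup List.length with hN
    have hsub : s ⊆ CMT.U N := by
      intro w hw
      exact CMT.mem_U N w (Finset.le_sup hw)
    calc ∑ w ∈ s, CMT.F w ≤ ∑ w ∈ CMT.U N, CMT.F w :=
          Finset.sum_le_sum_of_subset_of_nonneg hsub (fun w _ _ => CMT.F_nonneg w)
      _ = 1 / 3 - ∑ w ∈ CMT.L (N + 1), CMT.H w := CMT.sum_F_U N
      _ ≤ 1 / 3 := by
          have : 0 ≤ ∑ w ∈ CMT.L (N + 1), CMT.H w :=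
            Finset.sum_nonneg (fun w _ => CMT.H_nonneg w)
          linarith
  · -- least upper bound
    intro b hb
    have key : ∀ N : ℕ, 1 / 3 - 1 / (3 * ((N:ℝ) + 2) ^ 2) ≤ b := by
      intro N
      have hmem : ∑ w ∈ CMT.U N, CMT.F w ∈ Set.range fun s => ∑ w ∈ s, CMT.F w :=
        ⟨CMT.U N, rfl⟩
      have h1 : ∑ w ∈ CMT.U N, CMT.F w ≤ b := hb hmem
      have h2 := CMT.sum_F_U N
      have h3 := CMT.sum_H_L_le (N + 1)
      push_cast at h3
      have e2 : (3 * ((N:ℝ) + 2) ^ 2) = 3 * ((N:ℝ) + 1 + 1) ^ 2 := by ring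
      rw [e2]
      linarith
    have htend : Filter.Tendsto (fun N : ℕ => 1 / 3 - 1 / (3 * ((N:ℝ) + 2) ^ 2))
        Filter.atTop (nhds (1 / 3)) := by
      have h0 : Filter.Tendsto (fun N : ℕ => 3 * ((N:ℝ) + 2) ^ 2) Filter.atTop Filter.atTop := by
        have hg : Filter.Tendsto (fun N : ℕ => ((N:ℝ) + 2)) Filter.atTop Filter.atTop :=
          Filter.tendsto_atTop_add_const_right _ 2 tendsto_natCast_atTop_atTop
        apply Filter.tendsto_atTop_mono _ hg
        intro N
        have hN : (0:ℝ) ≤ (N:ℝ) := Nat.cast_nonneg N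
        nlinarith
      have h1 : Filter.Tendsto (fun N : ℕ => (3 * ((N:ℝ) + 2) ^ 2)⁻¹)
          Filter.atTop (nhds 0) := h0.inv_tendsto_atTop
      have h2 := Filter.Tendsto.const_sub (1/3 : ℝ) h1
      simp only [sub_zero] at h2
      simpa [one_div] using h2
    exact le_of_tendsto htend (Filter.Eventually.of_forall key)
end

section
/- Define φ : ℝ² → ℝ by φ(a,b) = √(ab) if a,b ≥ 0 and φ(a,b) = min{a,b} otherwise. For each integer n ≥ 2, let μ(n) = φ(n,1) − φ(n−1,1) − φ(1,0) = n(1/√n − 1/√(n−1)) + 1/√(n−1). Then μ(n) ∼ 1/√n (i.e., there exist positive constants B, C with B/√n ≤ μ(n) ≤ C/√n for all large n), and consequently the series Σ_{n ≥ 2} μ(n)² diverges. -/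
/-- The conical function on ℝ² mimicking a cusp at the origin:
`φ(a,b) = √(ab)` if `a,b ≥ 0` and `min a b` otherwise. -/
noncomputable def phiCusp (p : ℝ × ℝ) : ℝ :=
  if 0 ≤ p.1 ∧ 0 ≤ p.2 then Real.sqrt (p.1 * p.2) else min p.1 p.2

/-- The jumping numbers of the associated toric ℝ-b-divisor along `(n,1)`. -/
noncomputable def muCusp (n : ℕ) : ℝ :=
  phiCusp ((n : ℝ), 1) - phiCusp ((n : ℝ) - 1, 1) - phiCusp (1, 0)

/-! For `n ≥ 1` all three arguments of `φ` lie in the closed positive quadrant, so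
`μ(n) = √n - √(n-1) = 1 / (√n + √(n-1))`, which lies between `1 / (2√n)` and `1 / √n`.
Hence `μ(n)² ≥ 1 / (4n)`, and the harmonic series forces `∑ μ(n)²` to diverge. -/

open Real

lemma phiCusp_of_nonneg {a b : ℝ} (ha : 0 ≤ a) (hb : 0 ≤ b) : phiCusp (a, b) = √(a * b) :=
  if_pos ⟨ha, hb⟩

lemma muCusp_eq_sqrt_sub_sqrt {n : ℕ} (hn : 1 ≤ n) : muCusp n = √n - √((n : ℝ) - 1) := by
  have hn' : (0 : ℝ) ≤ (n : ℝ) - 1 := sub_nonneg.2 (by exact_mod_cast hn)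
  simp only [muCusp, phiCusp_of_nonneg n.cast_nonneg zero_le_one,
    phiCusp_of_nonneg hn' zero_le_one, phiCusp_of_nonneg zero_le_one le_rfl]
  simp

section SqrtDifference

variable {x : ℝ}

lemma sqrt_sub_sqrt_sub_one_mul_add (hx : 1 ≤ x) :
    (√x - √(x - 1)) * (√x + √(x - 1)) = 1 := by
  have hx₀ : (0 : ℝ) ≤ x := by linarith
  have hx₁ : (0 : ℝ) ≤ x - 1 := by linarith
  linear_combination sq_sqrt hx₀ - sq_sqrt hx₁

lemma one_div_two_div_sqrt_le_sqrt_sub_sqrt_sub_one (hx : 1 ≤ x) :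
    1 / 2 / √x ≤ √x - √(x - 1) := by
  have hpos : 0 < √x := sqrt_pos.2 (by linarith)
  have hle : √(x - 1) ≤ √x := sqrt_le_sqrt (by linarith)
  rw [div_le_iff₀ hpos]
  nlinarith [sqrt_sub_sqrt_sub_one_mul_add hx]

lemma sqrt_sub_sqrt_sub_one_le_one_div_sqrt (hx : 1 ≤ x) :
    √x - √(x - 1) ≤ 1 / √x := by
  have hpos : 0 < √x := sqrt_pos.2 (by linarith)
  have hle : √(x - 1) ≤ √x := sqrt_le_sqrt (by linarith)
  rw [le_div_iff₀ hpos]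
  nlinarith [sqrt_sub_sqrt_sub_one_mul_add hx, sqrt_nonneg (x - 1)]

lemma mul_one_div_sqrt_sub_add_eq_sqrt_sub_sqrt (hx : 1 < x) :
    x * (1 / √x - 1 / √(x - 1)) + 1 / √(x - 1) = √x - √(x - 1) := by
  have hx₀ : 0 < √x := sqrt_pos.2 (by linarith)
  have hx₁ : 0 < √(x - 1) := sqrt_pos.2 (by linarith)
  field_simp
  linear_combination √x * sq_sqrt (by linarith : (0 : ℝ) ≤ x - 1) -
    √(x - 1) * sq_sqrt (by linarith : (0 : ℝ) ≤ x)

end SqrtDifference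

lemma inv_four_mul_le_muCusp_sq {n : ℕ} (hn : 1 ≤ n) : (4 * (n : ℝ))⁻¹ ≤ muCusp n ^ 2 := by
  have hx : (1 : ℝ) ≤ n := by exact_mod_cast hn
  have hlow := one_div_two_div_sqrt_le_sqrt_sub_sqrt_sub_one hx
  rw [← muCusp_eq_sqrt_sub_sqrt hn] at hlow
  calc (4 * (n : ℝ))⁻¹ = (1 / 2 / √n) ^ 2 := by
        rw [div_pow, sq_sqrt n.cast_nonneg]; ring
    _ ≤ muCusp n ^ 2 := pow_le_pow_left₀ (by positivity) hlow 2

lemma not_summable_muCusp_sq : ¬ Summable (fun n : ℕ => muCusp n ^ 2) := by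
  intro h
  have hbound : ∀ᶠ n : ℕ in Filter.atTop, ‖(4 * (n : ℝ))⁻¹‖ ≤ muCusp n ^ 2 :=
    Filter.eventually_atTop.2 ⟨1, fun n hn => by
      rw [Real.norm_of_nonneg (by positivity)]
      exact inv_four_mul_le_muCusp_sq hn⟩
  have hsum : Summable (fun n : ℕ => (4 : ℝ)⁻¹ * (n : ℝ)⁻¹) := by
    simpa only [mul_inv] using h.of_norm_bounded_eventually_nat hbound
  exact Real.not_summable_natCast_inv ((summable_mul_left_iff (by norm_num)).1 hsum)

theorem muCusp_asymptotics_and_divergence :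
    (∀ n : ℕ, 2 ≤ n →
        muCusp n = (n : ℝ) * (1 / Real.sqrt n - 1 / Real.sqrt ((n : ℝ) - 1)) +
          1 / Real.sqrt ((n : ℝ) - 1)) ∧
      (∃ B C : ℝ, 0 < B ∧ 0 < C ∧ ∃ N : ℕ, ∀ n : ℕ, N ≤ n →
        B / Real.sqrt n ≤ muCusp n ∧ muCusp n ≤ C / Real.sqrt n) ∧
      ¬ Summable (fun n : ℕ => (muCusp n) ^ 2) := by
  refine ⟨fun n hn => ?_, ⟨1 / 2, 1, by norm_num, one_pos, 1, fun n hn => ?_⟩,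
    not_summable_muCusp_sq⟩
  · rw [muCusp_eq_sqrt_sub_sqrt (by omega),
      mul_one_div_sqrt_sub_add_eq_sqrt_sub_sqrt (by exact_mod_cast hn)]
  · have hx : (1 : ℝ) ≤ n := by exact_mod_cast hn
    rw [muCusp_eq_sqrt_sub_sqrt hn]
    exact ⟨one_div_two_div_sqrt_le_sqrt_sub_sqrt_sub_one hx,
      sqrt_sub_sqrt_sub_one_le_one_div_sqrt hx⟩
end

section
/- Define φ : ℝ² → ℝ by φ(a,b) = ab/(a+b) for a,b ≥ 0 with a+b > 0, φ(0,0) = 0, and φ(a,b) = min{a,b} otherwise. Then the stability set Δ_φ = {(x,y) ∈ ℝ² : (a,b) ↦ xa + yb − φ(a,b) is bounded below on ℝ²} equals {(x,y) ∈ ℝ² : x ≥ 0, y ≥ 0, x + y ≤ 1, √x + √y ≥ 1}. -/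
lemma phi_quad (a b : ℝ) (h : 0 ≤ a ∧ 0 ≤ b ∧ 0 < a + b) :
    phiP2 (a, b) = a * b / (a + b) := by
  unfold phiP2
  rw [if_pos h]

lemma no_lb (c w : ℝ) (hw : w < 0) (h : ∀ t : ℝ, 0 < t → c ≤ t * w) : False := by
  have ht : (0:ℝ) < max 1 ((c - 1) / w) := lt_of_lt_of_le one_pos (le_max_left _ _)
  have h1 := h _ ht
  have h2 : (c - 1) / w ≤ max 1 ((c - 1) / w) := le_max_right _ _
  rw [div_le_iff_of_neg hw] at h2
  linarith

lemma key_quadrant (x y : ℝ) (hx : 0 ≤ x) (hy : 0 ≤ y)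
    (hsq : 1 ≤ Real.sqrt x + Real.sqrt y) (a b : ℝ) (ha : 0 ≤ a) (hb : 0 ≤ b)
    (hab : 0 < a + b) : a * b / (a + b) ≤ x * a + y * b := by
  obtain ⟨s, hs, hsx⟩ : ∃ s, 0 ≤ s ∧ s ^ 2 = x := ⟨Real.sqrt x, Real.sqrt_nonneg x, Real.sq_sqrt hx⟩
  obtain ⟨t, ht, hty⟩ : ∃ t, 0 ≤ t ∧ t ^ 2 = y := ⟨Real.sqrt y, Real.sqrt_nonneg y, Real.sq_sqrt hy⟩
  subst hsx hty
  rw [Real.sqrt_sq hs, Real.sqrt_sq ht] at hsq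
  rw [div_le_iff₀ hab]
  have h2 : 1 ≤ (s + t) ^ 2 := by nlinarith
  nlinarith [sq_nonneg (s * a - t * b), mul_nonneg ha hb, h2]

lemma exists_neg (x y : ℝ) (hx : 0 ≤ x) (hy : 0 ≤ y)
    (h : Real.sqrt x + Real.sqrt y < 1) :
    ∃ a b : ℝ, 0 ≤ a ∧ 0 ≤ b ∧ 0 < a + b ∧ x * a + y * b - a * b / (a + b) < 0 := by
  have hs : 0 ≤ Real.sqrt x := Real.sqrt_nonneg x
  have ht : 0 ≤ Real.sqrt y := Real.sqrt_nonneg y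
  have hxs : Real.sqrt x ^ 2 = x := Real.sq_sqrt hx
  have hyt : Real.sqrt y ^ 2 = y := Real.sq_sqrt hy
  set s := Real.sqrt x
  set t := Real.sqrt y
  rcases lt_or_eq_of_le ht with ht0 | ht0
  · refine ⟨t, 1 - t, le_of_lt ht0, by linarith, by linarith, ?_⟩
    rw [show t + (1 - t) = (1:ℝ) by ring, div_one, ← hxs, ← hyt]
    nlinarith [mul_pos ht0 (mul_pos (show (0:ℝ) < 1 - t - s by linarith)
      (show (0:ℝ) < 1 - t + s by linarith))]
  · rcases lt_or_eq_of_le hs with hs0 | hs0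
    · refine ⟨1 - s, s, by linarith, le_of_lt hs0, by linarith, ?_⟩
      rw [show (1 - s) + s = (1:ℝ) by ring, div_one, ← hxs, ← hyt, ← ht0]
      nlinarith [mul_pos hs0 (mul_pos (show (0:ℝ) < 1 - s by linarith)
        (show (0:ℝ) < 1 - s by linarith))]
    · have hx0 : x = 0 := by rw [← hxs, ← hs0]; ring
      have hy0 : y = 0 := by rw [← hyt, ← ht0]; ring
      refine ⟨1, 1, zero_le_one, zero_le_one, by norm_num, ?_⟩
      rw [hx0, hy0]; norm_num

theorem stability_set_phiP2 :
    {p : ℝ × ℝ | ∃ c : ℝ, ∀ q : ℝ × ℝ, c ≤ p.1 * q.1 + p.2 * q.2 - phiP2 q} =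
      {p : ℝ × ℝ | 0 ≤ p.1 ∧ 0 ≤ p.2 ∧ p.1 + p.2 ≤ 1 ∧
        1 ≤ Real.sqrt p.1 + Real.sqrt p.2} := by
  ext p
  simp only [Set.mem_setOf_eq]
  constructor
  · rintro ⟨c, hc⟩
    have hx : 0 ≤ p.1 := by
      by_contra hneg
      push_neg at hneg
      refine (no_lb c p.1 hneg ?_).elim
      intro t ht
      have h := hc (t, 0)
      rw [phi_quad t 0 ⟨le_of_lt ht, le_refl 0, by linarith⟩] at h
      norm_num at h
      linarith
    have hy : 0 ≤ p.2 := by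
      by_contra hneg
      push_neg at hneg
      refine (no_lb c p.2 hneg ?_).elim
      intro t ht
      have h := hc (0, t)
      rw [phi_quad 0 t ⟨le_refl 0, le_of_lt ht, by linarith⟩] at h
      norm_num at h
      linarith
    have hsum : p.1 + p.2 ≤ 1 := by
      by_contra hneg
      push_neg at hneg
      refine (no_lb c (1 - p.1 - p.2) (by linarith) ?_).elim
      intro t ht
      have h := hc (-t, -t)
      have hc1 : ¬(0 ≤ (-t:ℝ) ∧ 0 ≤ (-t:ℝ) ∧ 0 < -t + -t) := fun hco => by linarith [hco.1]
      have hc2 : ((-t:ℝ), (-t:ℝ)) ≠ ((0:ℝ), (0:ℝ)) := by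
        intro hco
        rw [Prod.mk.injEq] at hco
        linarith [hco.1]
      have hphi : phiP2 (-t, -t) = -t := by
        unfold phiP2
        rw [if_neg hc1, if_neg hc2]
        simp
      rw [hphi] at h
      norm_num at h
      linarith
    refine ⟨hx, hy, hsum, ?_⟩
    by_contra hlt
    push_neg at hlt
    obtain ⟨a, b, ha, hb, hab, hneg⟩ := exists_neg p.1 p.2 hx hy hlt
    refine (no_lb c (p.1 * a + p.2 * b - a * b / (a + b)) hneg ?_).elim
    intro t ht
    have h := hc (t * a, t * b)
    have hphi : phiP2 (t * a, t * b) = t * (a * b / (a + b)) := by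
      rw [phi_quad _ _ ⟨mul_nonneg ht.le ha, mul_nonneg ht.le hb, by
        rw [show t * a + t * b = t * (a + b) by ring]; exact mul_pos ht hab⟩]
      rw [show t * a + t * b = t * (a + b) by ring]
      field_simp
    rw [hphi] at h
    simp only at h
    linarith
  · rintro ⟨hx, hy, hsum, hsq⟩
    refine ⟨0, fun q => ?_⟩
    by_cases hq : 0 ≤ q.1 ∧ 0 ≤ q.2 ∧ 0 < q.1 + q.2
    · have hkey := key_quadrant p.1 p.2 hx hy hsq q.1 q.2 hq.1 hq.2.1 hq.2.2
      have hphi : phiP2 q = q.1 * q.2 / (q.1 + q.2) := by unfold phiP2; rw [if_pos hq]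
      rw [hphi]; linarith
    · by_cases hq0 : q = (0, 0)
      · subst hq0
        norm_num [phiP2]
      · have hphi : phiP2 q = min q.1 q.2 := by unfold phiP2; rw [if_neg hq, if_neg hq0]
        rw [hphi]
        have hm : min q.1 q.2 ≤ 0 := by
          by_contra hm
          push_neg at hm
          exact hq ⟨(lt_of_lt_of_le hm (min_le_left _ _)).le,
            (lt_of_lt_of_le hm (min_le_right _ _)).le, by
              have := lt_of_lt_of_le hm (min_le_left q.1 q.2)
              have := lt_of_lt_of_le hm (min_le_right q.1 q.2)
              linarith⟩
        have h1 : p.1 * min q.1 q.2 ≤ p.1 * q.1 :=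
          mul_le_mul_of_nonneg_left (min_le_left _ _) hx
        have h2 : p.2 * min q.1 q.2 ≤ p.2 * q.2 :=
          mul_le_mul_of_nonneg_left (min_le_right _ _) hy
        have h3 := mul_le_mul_of_nonpos_right hsum hm
        nlinarith
end
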